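/- arXiv:2108.11401 — 3 statements merged into one kernel-verified Lean document; each statement's English description precedes it below -/
import Mathlib

section
/- For any real B > 1, real C ≥ 1, and positive integer ν, the generalized divisor function satisfies d_B(p^ν)^C ≪_{B,C} (5/4)^ν · (1 + ν/(B-1))^{(B-1)C}, where d_B(p^ν) = binomial(B+ν-1, ν). -/
/-!
Writing `t = B - 1`, the Gamma quotient is `∏_{k < ν} (1 + t/(k+1))`. Bounding each factor by
`exp (t/(k+1))` gives `exp (t·H_ν) ≤ e^t ν^t`, and `ν ≤ t (1 + ν/t)` turns this into
`(e t)^t (1 + ν/t)^t`. Raising this to the power `C` gives the claim; the factor `(5/4)^ν ≥ 1`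
only makes it weaker.
-/

open Finset Real

namespace Real

theorem Gamma_add_nat_eq_mul_prod {s : ℝ} (hs : ∀ m : ℕ, s ≠ -m) (n : ℕ) :
    Gamma (s + n) = Gamma s * ∏ k ∈ range n, (s + k) := by
  induction n with
  | zero => simp
  | succ n ih =>
    have hsn : s + n ≠ 0 := fun h => hs n (by linarith)
    rw [Nat.cast_succ, ← add_assoc, Gamma_add_one hsn, ih, prod_range_succ]
    ring

theorem Gamma_add_nat_div_eq_prod {s : ℝ} (hs : ∀ m : ℕ, s ≠ -m) (n : ℕ) :
    Gamma (s + n) / (Gamma s * n.factorial) = ∏ k ∈ range n, (1 + (s - 1) / (k + 1)) := by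
  have hfact : (n.factorial : ℝ) = ∏ k ∈ range n, ((k : ℝ) + 1) := by
    rw [← prod_range_add_one_eq_factorial]; push_cast; rfl
  rw [Gamma_add_nat_eq_mul_prod hs, hfact, mul_div_mul_left _ _ (Gamma_ne_zero hs),
    ← prod_div_distrib]
  refine prod_congr rfl fun k _ => ?_
  field_simp
  ring

end Real

theorem prod_one_add_div_le_exp_mul_harmonic {t : ℝ} (ht : -1 ≤ t) (n : ℕ) :
    ∏ k ∈ range n, (1 + t / (k + 1)) ≤ exp (t * harmonic n) := by
  have hsum : t * harmonic n = ∑ k ∈ range n, t / (k + 1) := by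
    simp only [harmonic, Rat.cast_sum, mul_sum, Rat.cast_inv, Rat.cast_natCast, Rat.cast_add,
      Rat.cast_one, div_eq_mul_inv, Nat.cast_add, Nat.cast_one]
  rw [hsum, exp_sum]
  refine prod_le_prod (fun k _ => ?_) fun k _ => add_comm (t / (k + 1)) 1 ▸ add_one_le_exp _
  have hk : (1 : ℝ) ≤ k + 1 := by simp
  have : -1 ≤ t / (k + 1) := by
    rw [le_div_iff₀ (by positivity)]
    nlinarith
  linarith

theorem prod_one_add_div_le_exp_mul_rpow {t : ℝ} (ht : 0 ≤ t) {n : ℕ} (hn : 0 < n) :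
    ∏ k ∈ range n, (1 + t / (k + 1)) ≤ exp t * (n : ℝ) ^ t := calc
  _ ≤ exp (t * harmonic n) := prod_one_add_div_le_exp_mul_harmonic (by linarith) n
  _ ≤ exp (t * (1 + log n)) := by gcongr; exact harmonic_le_one_add_log n
  _ = exp t * (n : ℝ) ^ t := by
    rw [mul_add, mul_one, exp_add, rpow_def_of_pos (by exact_mod_cast hn), mul_comm t]

theorem prod_one_add_div_le_mul_one_add_div_rpow {t : ℝ} (ht : 0 < t) {n : ℕ} (hn : 0 < n) :
    ∏ k ∈ range n, (1 + t / (k + 1)) ≤ exp t * t ^ t * (1 + n / t) ^ t := calc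
  _ ≤ exp t * (n : ℝ) ^ t := prod_one_add_div_le_exp_mul_rpow ht.le hn
  _ ≤ exp t * (t * (1 + n / t)) ^ t := by
    gcongr
    rw [mul_add, mul_one, mul_div_cancel₀ _ ht.ne']
    linarith
  _ = exp t * t ^ t * (1 + n / t) ^ t := by
    rw [mul_rpow ht.le (by positivity), mul_assoc]

/-- For real `B > 1`, `C ≥ 1`, the generalized divisor function at prime powers,
`d_B(p^ν) = Γ(B+ν)/(Γ(B)·ν!)`, satisfies
`d_B(p^ν)^C ≪_{B,C} (5/4)^ν · (1 + ν/(B-1))^{(B-1)C}`. -/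
theorem stmt_0 (B C : ℝ) (hB : 1 < B) (hC : 1 ≤ C) :
    ∃ K : ℝ, 0 < K ∧ ∀ ν : ℕ, 0 < ν →
      (Real.Gamma (B + ν) / (Real.Gamma B * Nat.factorial ν)) ^ C ≤
        K * (5 / 4 : ℝ) ^ ν * (1 + (ν : ℝ) / (B - 1)) ^ ((B - 1) * C) := by
  have ht : 0 < B - 1 := by linarith
  have hB_ne : ∀ m : ℕ, B ≠ -m := fun m h => by
    have : (0 : ℝ) ≤ m := m.cast_nonneg
    linarith
  refine ⟨(exp (B - 1) * (B - 1) ^ (B - 1)) ^ C, by positivity, fun ν hν => ?_⟩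
  rw [Real.Gamma_add_nat_div_eq_prod hB_ne]
  calc (∏ k ∈ range ν, (1 + (B - 1) / (k + 1))) ^ C
      ≤ (exp (B - 1) * (B - 1) ^ (B - 1) * (1 + ν / (B - 1)) ^ (B - 1)) ^ C := by
        gcongr
        exact prod_one_add_div_le_mul_one_add_div_rpow ht hν
    _ = (exp (B - 1) * (B - 1) ^ (B - 1)) ^ C * 1 * (1 + ν / (B - 1)) ^ ((B - 1) * C) := by
        rw [mul_rpow (by positivity) (by positivity), rpow_mul (by positivity), mul_one]
    _ ≤ _ := by
        gcongr
        exact one_le_pow₀ (by norm_num)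
end

section
/- Fix θ ∈ (0,1] and define f_θ(p) := 1 + cos(θ·log p) for primes p. Let β := min{1/θ, log X}. Then Σ_{p ≤ X} f_θ(p)/p = log(β·log X) + O(1), with an absolute implied constant. -/
/-!
Put `δ = 1 / log X`. The partial sum `∑_{p ≤ X} p^{-(1+it)}` is within `O(1)` of the prime zeta
function `P(1 + δ + it) = ∑_p p^{-(1+δ+it)}`: termwise the error is at most `e δ log p / p^{1+δ}`,
and Chebyshev's bound `∑_{p ≤ x} log p ≤ x log 4`, summed over dyadic blocks, gives
`∑_p log p / p^{1+δ} = O(1/δ)`. The Euler product gives `Re P(s) = log |ζ(s)| + O(1)` for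
`Re s > 1`, and as `(s - 1) ζ(s)` is continuous and zero-free on the compact set
`[1, 2] × [-1, 1]`, there `log |ζ(s)| = -log |s - 1| + O(1)`. Hence
`∑_{p ≤ X} cos(t log p) / p = -log max(δ, |t|) + O(1)`; the theorem is the sum of the cases
`t = θ` and `t = 0`, since `min(1/θ, log X) = 1 / max(δ, θ)`.
-/

open Finset Real

lemma two_pow_succ_div_rpow (k : ℕ) (σ : ℝ) :
    (2 : ℝ) ^ (k + 1) / ((2 : ℝ) ^ k) ^ σ = 2 * ((2 : ℝ) ^ (1 - σ)) ^ k := by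
  rw [← rpow_natCast_mul (by norm_num), ← rpow_mul_natCast (by norm_num), ← rpow_natCast,
    ← rpow_sub (by norm_num)]
  conv_lhs => rw [show ((k + 1 : ℕ) : ℝ) - k * σ = 1 + (1 - σ) * k by push_cast; ring]
  rw [rpow_add (by norm_num), rpow_one]

lemma sum_primesLE_log_div_rpow_le {σ : ℝ} (hσ : 0 ≤ σ) (X : ℕ) :
    ∑ p ∈ Nat.primesLE X, log p / (p : ℝ) ^ σ
      ≤ 2 * log 4 * ∑ k ∈ range (Nat.log 2 X + 1), ((2 : ℝ) ^ (1 - σ)) ^ k := by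
  have hmaps : ∀ p ∈ Nat.primesLE X, Nat.log 2 p ∈ range (Nat.log 2 X + 1) := fun p hp =>
    mem_range_succ_iff.mpr (Nat.log_mono_right (Nat.mem_primesLE.mp hp).1)
  rw [← sum_fiberwise_of_maps_to hmaps, mul_sum]
  refine sum_le_sum fun k _ => ?_
  set block := {p ∈ Nat.primesLE X | Nat.log 2 p = k}
  have hblock : block ⊆ Nat.primesLE (2 ^ (k + 1)) := fun p hp => by
    obtain ⟨hpX, hpk⟩ := mem_filter.mp hp
    exact Nat.mem_primesLE.mpr ⟨(hpk ▸ Nat.lt_pow_succ_log_self one_lt_two p).le,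
      (Nat.mem_primesLE.mp hpX).2⟩
  calc ∑ p ∈ block, log p / (p : ℝ) ^ σ ≤ ∑ p ∈ block, log p / ((2 : ℝ) ^ k) ^ σ := by
        refine sum_le_sum fun p hp => ?_
        obtain ⟨hpX, hpk⟩ := mem_filter.mp hp
        have h2k : ((2 : ℕ) ^ k : ℝ) ≤ p := by
          exact_mod_cast hpk ▸ Nat.pow_log_le_self 2 (Nat.mem_primesLE.mp hpX).2.ne_zero
        push_cast at h2k
        gcongr
    _ = (∑ p ∈ block, log p) / ((2 : ℝ) ^ k) ^ σ := by rw [sum_div]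
    _ ≤ log 4 * (2 : ℝ) ^ (k + 1) / ((2 : ℝ) ^ k) ^ σ := by
        gcongr
        calc ∑ p ∈ block, log p ≤ ∑ p ∈ Nat.primesLE (2 ^ (k + 1)), log p :=
              sum_le_sum_of_subset_of_nonneg hblock fun p _ _ => Real.log_natCast_nonneg p
          _ = Chebyshev.theta (2 ^ (k + 1) : ℕ) := (Chebyshev.theta_eq_sum_primesLE_log _).symm
          _ ≤ log 4 * (2 : ℝ) ^ (k + 1) := by
              simpa using Chebyshev.theta_le_log4_mul_x (x := (2 ^ (k + 1) : ℕ)) (by positivity)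
    _ = 2 * log 4 * ((2 : ℝ) ^ (1 - σ)) ^ k := by
        rw [mul_div_assoc, two_pow_succ_div_rpow]; ring

lemma inv_one_sub_exp_neg_le {x : ℝ} (hx : 0 < x) : (1 - exp (-x))⁻¹ ≤ 1 + x⁻¹ := by
  have hx' : x ≤ exp x - 1 := by linarith [add_one_le_exp x]
  have hpos : 0 < exp x - 1 := hx.trans_le hx'
  have h : (1 - exp (-x))⁻¹ = 1 + (exp x - 1)⁻¹ := by
    rw [exp_neg]; field_simp; ring
  rw [h]
  gcongr

lemma sum_primesLE_log_div_rpow_one_add_le {δ : ℝ} (hδ : 0 < δ) (hδ1 : δ ≤ 1) (X : ℕ) :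
    ∑ p ∈ Nat.primesLE X, log p / (p : ℝ) ^ (1 + δ) ≤ 8 / δ := by
  have hlog2 : 0 < log 2 := log_pos one_lt_two
  have hr : (2 : ℝ) ^ (1 - (1 + δ)) = exp (-(δ * log 2)) := by
    rw [rpow_def_of_pos two_pos]; ring_nf
  have hr1 : exp (-(δ * log 2)) < 1 := exp_lt_one_iff.mpr (by nlinarith)
  calc ∑ p ∈ Nat.primesLE X, log p / (p : ℝ) ^ (1 + δ)
      ≤ 2 * log 4 * ∑ k ∈ range (Nat.log 2 X + 1), ((2 : ℝ) ^ (1 - (1 + δ))) ^ k :=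
        sum_primesLE_log_div_rpow_le (by linarith) X
    _ ≤ 2 * log 4 * (1 + (δ * log 2)⁻¹) := by
        rw [hr, range_eq_Ico]
        gcongr
        refine (geom_sum_Ico_le_of_lt_one (exp_nonneg _) hr1).trans ?_
        simpa using inv_one_sub_exp_neg_le (by positivity : 0 < δ * log 2)
    _ = 4 * log 2 + 4 / δ := by
        rw [show (4 : ℝ) = 2 ^ 2 by norm_num, Real.log_pow]; field_simp; ring
    _ ≤ 8 / δ := by
        have : log 2 ≤ 1 / δ :=
          (log_two_lt_d9.le.trans (by norm_num)).trans ((one_le_div hδ).mpr hδ1)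
        rw [show (8 : ℝ) / δ = 4 * (1 / δ) + 4 / δ by ring]; linarith

lemma sum_primes_log_div_rpow_one_add_le {δ : ℝ} (hδ : 0 < δ) (hδ1 : δ ≤ 1)
    (F : Finset Nat.Primes) : ∑ p ∈ F, log p / (p : ℝ) ^ (1 + δ) ≤ 8 / δ := by
  have hsub : F.map (Function.Embedding.subtype _) ⊆ Nat.primesLE (F.sup (↑)) := by
    intro n hn
    obtain ⟨p, hp, rfl⟩ := mem_map.mp hn
    exact Nat.mem_primesLE.mpr ⟨le_sup (f := ((↑) : Nat.Primes → ℕ)) hp, p.prop⟩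
  calc ∑ p ∈ F, log p / (p : ℝ) ^ (1 + δ)
      = ∑ n ∈ F.map (Function.Embedding.subtype _), log n / (n : ℝ) ^ (1 + δ) :=
        (sum_map F (Function.Embedding.subtype _) fun n : ℕ => log n / (n : ℝ) ^ (1 + δ)).symm
    _ ≤ ∑ n ∈ Nat.primesLE (F.sup (↑)), log n / (n : ℝ) ^ (1 + δ) :=
        sum_le_sum_of_subset_of_nonneg hsub fun n _ _ => by positivity
    _ ≤ 8 / δ := sum_primesLE_log_div_rpow_one_add_le hδ hδ1 _

noncomputable def primeZeta (s : ℂ) : ℂ := ∑' p : Nat.Primes, (p : ℂ) ^ (-s)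

lemma summable_primes_cpow_neg {s : ℂ} (hs : 1 < s.re) :
    Summable fun p : Nat.Primes => (p : ℂ) ^ (-s) := by
  refine Summable.of_norm ((Nat.Primes.summable_rpow.mpr (neg_lt_neg hs)).congr fun p => ?_)
  rw [Complex.norm_natCast_cpow_of_pos p.prop.pos, Complex.neg_re]

lemma norm_natCast_cpow_neg_sub_cpow_neg_add_le {n : ℕ} (hn : 0 < n) (s : ℂ) {δ : ℝ}
    (hδ : 0 ≤ δ) : ‖(n : ℂ) ^ (-s) - (n : ℂ) ^ (-(s + δ))‖ ≤ δ * log n / (n : ℝ) ^ s.re := by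
  have hn0 : (0 : ℝ) < n := Nat.cast_pos.mpr hn
  have hnδ : (n : ℂ) ^ (-(δ : ℂ)) = ((n : ℝ) ^ (-δ) : ℝ) := by
    rw [Complex.ofReal_cpow hn0.le, Complex.ofReal_natCast, Complex.ofReal_neg]
  have hexp : (n : ℝ) ^ (-δ) = exp (-(δ * log n)) := by
    rw [rpow_def_of_pos hn0]; ring_nf
  have hle : (n : ℝ) ^ (-δ) ≤ 1 :=
    rpow_le_one_of_one_le_of_nonpos (by exact_mod_cast hn) (by linarith)
  have hge : 1 - δ * log n ≤ (n : ℝ) ^ (-δ) := by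
    rw [hexp]; linarith [add_one_le_exp (-(δ * log n))]
  rw [neg_add, Complex.cpow_add _ _ (by exact_mod_cast hn.ne'), hnδ, ← mul_one_sub, norm_mul,
    Complex.norm_natCast_cpow_of_pos hn, Complex.neg_re, ← Complex.ofReal_one,
    ← Complex.ofReal_sub, Complex.norm_real, Real.norm_of_nonneg (by linarith), rpow_neg hn0.le,
    inv_mul_eq_div]
  gcongr
  linarith

lemma one_le_log_natCast {X : ℕ} (hX : 3 ≤ X) : 1 ≤ log X := by
  rw [le_log_iff_exp_le (by positivity)]
  calc exp 1 ≤ 3 := (exp_one_lt_d9.trans (by norm_num)).le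
    _ ≤ X := by exact_mod_cast hX

lemma norm_ite_cpow_neg_sub_cpow_neg_add_le {X p : ℕ} (hX : 1 < X) (hp : 0 < p) {s : ℂ}
    (hs : s.re = 1) :
    ‖(if p ≤ X then (p : ℂ) ^ (-s) else 0) - (p : ℂ) ^ (-(s + (log X)⁻¹))‖
      ≤ exp 1 * (log X)⁻¹ * (log p / (p : ℝ) ^ (1 + (log X)⁻¹)) := by
  set δ := (log X)⁻¹
  have hlogX : 0 < log X := log_pos (by exact_mod_cast hX)
  have hδ : 0 < δ := inv_pos.mpr hlogX
  have hp0 : (0 : ℝ) < p := Nat.cast_pos.mpr hp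
  have hδlog : δ * log p = log p / log X := by rw [mul_comm]; rfl
  split_ifs with hpX
  · have hpδ : (p : ℝ) ^ δ ≤ exp 1 := by
      rw [rpow_def_of_pos hp0, exp_le_exp, mul_comm, hδlog, div_le_one hlogX]
      exact log_le_log hp0 (by exact_mod_cast hpX)
    calc ‖(p : ℂ) ^ (-s) - (p : ℂ) ^ (-(s + δ))‖ ≤ δ * log p / (p : ℝ) ^ s.re :=
          norm_natCast_cpow_neg_sub_cpow_neg_add_le hp s hδ.le
      _ = (p : ℝ) ^ δ * δ * (log p / (p : ℝ) ^ (1 + δ)) := by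
          rw [hs, rpow_add hp0, rpow_one]; field_simp
      _ ≤ exp 1 * δ * (log p / (p : ℝ) ^ (1 + δ)) := by gcongr
  · have h1 : 1 ≤ δ * log p := by
      rw [hδlog, one_le_div hlogX]
      exact log_le_log (by positivity) (by exact_mod_cast (not_le.mp hpX).le)
    rw [zero_sub, norm_neg, Complex.norm_natCast_cpow_of_pos hp, Complex.neg_re, Complex.add_re,
      hs, Complex.ofReal_re, rpow_neg hp0.le, inv_eq_one_div, mul_div]
    gcongr
    calc (1 : ℝ) ≤ 1 * 1 := by norm_num
      _ ≤ exp 1 * (δ * log p) := by gcongr; exact one_le_exp one_pos.le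
      _ = exp 1 * δ * log p := by ring

lemma hasSum_primes_ite_le {M : Type*} [AddCommMonoid M] [TopologicalSpace M] (f : ℕ → M)
    (X : ℕ) :
    HasSum (fun p : Nat.Primes => if (p : ℕ) ≤ X then f p else 0) (∑ p ∈ Nat.primesLE X, f p) := by
  convert hasSum_sum_of_ne_finset_zero (L := .unconditional _)
    (s := (Nat.primesLE X).subtype Nat.Prime)
    (f := fun p : Nat.Primes => if (p : ℕ) ≤ X then f p else 0) fun p hp =>
      if_neg fun hpX => hp (mem_subtype.mpr (Nat.mem_primesLE.mpr ⟨hpX, p.prop⟩)) using 1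
  refine (sum_congr rfl fun n hn => ?_).trans (sum_subtype_of_mem
    (fun n => if n ≤ X then f n else 0) fun n hn => (Nat.mem_primesLE.mp hn).2).symm
  exact (if_pos (Nat.mem_primesLE.mp hn).1).symm

theorem norm_sum_primesLE_cpow_neg_sub_primeZeta_le {X : ℕ} (hX : 3 ≤ X) {s : ℂ}
    (hs : s.re = 1) :
    ‖∑ p ∈ Nat.primesLE X, (p : ℂ) ^ (-s) - primeZeta (s + (log X)⁻¹)‖ ≤ 8 * exp 1 := by
  set δ := (log X)⁻¹
  have hδ : 0 < δ := inv_pos.mpr (by linarith [one_le_log_natCast hX])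
  have hδ1 : δ ≤ 1 := inv_le_one_of_one_le₀ (one_le_log_natCast hX)
  have hhead := hasSum_primes_ite_le (fun n : ℕ => (n : ℂ) ^ (-s)) X
  have htail := (summable_primes_cpow_neg (s := s + δ) (by simp [hs, hδ])).hasSum
  set b : Nat.Primes → ℝ := fun p => exp 1 * δ * (log p / (p : ℝ) ^ (1 + δ))
  have hb : ∀ F : Finset Nat.Primes, ∑ p ∈ F, b p ≤ 8 * exp 1 := fun F => by
    rw [← mul_sum]
    calc exp 1 * δ * ∑ p ∈ F, log p / (p : ℝ) ^ (1 + δ) ≤ exp 1 * δ * (8 / δ) := by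
          gcongr; exact sum_primes_log_div_rpow_one_add_le hδ hδ1 F
      _ = 8 * exp 1 := by field_simp
  have hb0 : 0 ≤ b := fun p => by positivity
  exact ((hhead.sub htail).norm_le_of_bounded (summable_of_sum_le hb0 hb).hasSum
    fun p => norm_ite_cpow_neg_sub_cpow_neg_add_le (by omega) p.prop.pos hs).trans
    (Real.tsum_le_of_sum_le hb0 hb)

lemma norm_neg_log_one_sub_sub_le {z : ℂ} (hz : ‖z‖ ≤ 1 / 2) :
    ‖-Complex.log (1 - z) - z‖ ≤ ‖z‖ ^ 2 := by
  have h := Complex.norm_log_one_add_sub_self_le (z := -z) (by rw [norm_neg]; linarith)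
  rw [norm_neg, ← sub_eq_add_neg, sub_neg_eq_add] at h
  rw [← norm_neg, neg_sub, sub_neg_eq_add, add_comm]
  refine h.trans ?_
  have : (1 - ‖z‖)⁻¹ ≤ 2 := by rw [inv_le_comm₀ (by linarith) two_pos]; linarith
  nlinarith [sq_nonneg ‖z‖]

lemma tsum_primes_inv_sq_le : ∑' p : Nat.Primes, ((p : ℝ) ^ 2)⁻¹ ≤ 2 := by
  have hzeta2 : HasSum (fun n : ℕ => ((n : ℝ) ^ 2)⁻¹) (π ^ 2 / 6) := by
    simpa only [one_div] using hasSum_zeta_two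
  calc ∑' p : Nat.Primes, ((p : ℝ) ^ 2)⁻¹ ≤ ∑' n : ℕ, ((n : ℝ) ^ 2)⁻¹ :=
        hzeta2.summable.tsum_subtype_le _ {n : ℕ | n.Prime} fun n => by positivity
    _ = π ^ 2 / 6 := hzeta2.tsum_eq
    _ ≤ 2 := by nlinarith [pi_lt_d2, pi_pos]

theorem abs_log_norm_riemannZeta_sub_re_primeZeta_le {s : ℂ} (hs : 1 < s.re) :
    |log ‖riemannZeta s‖ - (primeZeta s).re| ≤ 2 := by
  have hP := summable_primes_cpow_neg hs
  have hL : Summable fun p : Nat.Primes => -Complex.log (1 - (p : ℂ) ^ (-s)) :=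
    hP.clog_one_sub.neg
  have hterm : ∀ p : Nat.Primes, ‖(p : ℂ) ^ (-s)‖ ≤ ((p : ℝ))⁻¹ := fun p => by
    rw [Complex.norm_natCast_cpow_of_pos p.prop.pos, Complex.neg_re, rpow_neg (Nat.cast_nonneg _)]
    exact inv_anti₀ (by exact_mod_cast p.prop.pos)
      (self_le_rpow_of_one_le (by exact_mod_cast p.prop.one_lt.le) hs.le)
  have hbound : ∀ p : Nat.Primes,
      ‖-Complex.log (1 - (p : ℂ) ^ (-s)) - (p : ℂ) ^ (-s)‖ ≤ ((p : ℝ) ^ 2)⁻¹ := fun p => by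
    have h2 : ((p : ℝ))⁻¹ ≤ 1 / 2 := by
      rw [one_div]; exact inv_anti₀ two_pos (by exact_mod_cast p.prop.two_le)
    refine (norm_neg_log_one_sub_sub_le ((hterm p).trans h2)).trans ?_
    rw [← inv_pow]
    gcongr
    exact hterm p
  rw [← riemannZeta_eulerProduct_exp_log hs, Complex.norm_exp, Real.log_exp, primeZeta,
    ← Complex.sub_re, ← hL.tsum_sub hP]
  refine (Complex.abs_re_le_norm _).trans
    ((tsum_of_norm_bounded ?_ hbound).trans tsum_primes_inv_sq_le)
  exact ((Nat.Primes.summable_rpow.mpr (by norm_num : (-2 : ℝ) < -1)).congr fun p => by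
    rw [rpow_neg (Nat.cast_nonneg _), rpow_two]).hasSum

theorem IsCompact.exists_abs_log_norm_riemannZeta_add_log_norm_sub_one_le {K : Set ℂ}
    (hK : IsCompact K) (hK1 : ∀ s ∈ K, 1 ≤ s.re) :
    ∃ C, ∀ s ∈ K, s ≠ 1 → |log ‖riemannZeta s‖ + log ‖s - 1‖| ≤ C := by
  classical
  set G : ℂ → ℂ := Function.update (fun s => (s - 1) * riemannZeta s) 1 1
  have hG : ∀ s, s ≠ 1 → G s = (s - 1) * riemannZeta s := fun s hs =>
    Function.update_of_ne hs _ _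
  have hG_ne : ∀ s ∈ K, G s ≠ 0 := fun s hs => by
    rcases eq_or_ne s 1 with rfl | h1
    · simp [G]
    · rw [hG s h1]
      exact mul_ne_zero (sub_ne_zero.mpr h1) (riemannZeta_ne_zero_of_one_le_re (hK1 s hs))
  have hG_cont : ∀ s, ContinuousAt G s := fun s => by
    rcases eq_or_ne s 1 with rfl | h1
    · simpa only [G, continuousAt_update_same] using riemannZeta_residue_one
    · refine (((continuous_sub_right 1).continuousAt).mul
        (differentiableAt_riemannZeta h1).continuousAt).congr ?_
      filter_upwards [isOpen_ne.mem_nhds h1] with w hw using (hG w hw).symm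
  obtain ⟨C, hC⟩ := hK.exists_bound_of_continuousOn (f := fun s => log ‖G s‖)
    fun s hs => ((hG_cont s).norm.log (norm_ne_zero_iff.mpr (hG_ne s hs))).continuousWithinAt
  refine ⟨C, fun s hs h1 => ?_⟩
  have := hC s hs
  rwa [Real.norm_eq_abs, hG s h1, norm_mul, log_mul (norm_ne_zero_iff.mpr (sub_ne_zero.mpr h1))
    (norm_ne_zero_iff.mpr (riemannZeta_ne_zero_of_one_le_re (hK1 s hs))), add_comm] at this

lemma re_natCast_cpow_neg_one_add_mul_I (n : ℕ) (t : ℝ) :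
    ((n : ℂ) ^ (-(1 + t * Complex.I))).re = cos (t * log n) / n := by
  rcases Nat.eq_zero_or_pos n with rfl | hn
  · rw [Nat.cast_zero, Complex.zero_cpow (by simp [Complex.ext_iff]), Nat.cast_zero, div_zero,
      Complex.zero_re]
  · have hn0 : (0 : ℝ) < n := Nat.cast_pos.mpr hn
    rw [Complex.cpow_def_of_ne_zero (by exact_mod_cast hn.ne'), Complex.exp_re]
    simp [Complex.log_re, Complex.log_im, exp_neg, exp_log hn0, div_eq_inv_mul, mul_comm]

lemma abs_log_norm_sub_log_max_le {z : ℂ} (hz : z ≠ 0) :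
    |log ‖z‖ - log (max |z.re| |z.im|)| ≤ log 2 := by
  set m := max |z.re| |z.im|
  have hm_le : m ≤ ‖z‖ := max_le (Complex.abs_re_le_norm z) (Complex.abs_im_le_norm z)
  have hle_m : ‖z‖ ≤ 2 * m := (Complex.norm_le_abs_re_add_abs_im z).trans
    (by linarith [le_max_left |z.re| |z.im|, le_max_right |z.re| |z.im|])
  have hm : 0 < m := by
    by_contra! h
    exact hz (norm_eq_zero.mp (le_antisymm (by linarith) (norm_nonneg z)))
  rw [abs_sub_le_iff, sub_le_iff_le_add, sub_le_iff_le_add, ← log_mul two_pos.ne' hm.ne']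
  exact ⟨log_le_log (norm_pos_iff.mpr hz) hle_m,
    by linarith [log_le_log hm hm_le, log_pos one_lt_two]⟩

theorem exists_abs_sum_primesLE_cos_div_add_log_max_le :
    ∃ C, ∀ t : ℝ, |t| ≤ 1 → ∀ X : ℕ, 3 ≤ X →
      |∑ p ∈ Nat.primesLE X, cos (t * log p) / p + log (max (log X)⁻¹ |t|)| ≤ C := by
  obtain ⟨C, hC⟩ := ((isCompact_Icc (a := (1 : ℝ)) (b := 2)).reProdIm
    (isCompact_Icc (a := (-1 : ℝ)) (b := 1)))
    |>.exists_abs_log_norm_riemannZeta_add_log_norm_sub_one_le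
      fun s hs => (Complex.mem_reProdIm.mp hs).1.1
  refine ⟨8 * exp 1 + 2 + C + log 2, fun t ht X hX => ?_⟩
  set δ := (log X)⁻¹
  have hδ : 0 < δ := inv_pos.mpr (by linarith [one_le_log_natCast hX])
  have hδ1 : δ ≤ 1 := inv_le_one_of_one_le₀ (one_le_log_natCast hX)
  set s : ℂ := 1 + t * Complex.I
  have hs : s.re = 1 := by simp [s]
  have hz : s + δ - 1 = δ + t * Complex.I := by ring
  have hz0 : s + δ - 1 ≠ 0 := by
    rw [hz]; intro h; simpa [hδ.ne'] using congrArg Complex.re h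
  have hsum : ∑ p ∈ Nat.primesLE X, cos (t * log p) / p
      = (∑ p ∈ Nat.primesLE X, (p : ℂ) ^ (-s)).re := by
    simp only [Complex.re_sum, s, re_natCast_cpow_neg_one_add_mul_I]
  have htrunc : |(∑ p ∈ Nat.primesLE X, (p : ℂ) ^ (-s)).re - (primeZeta (s + δ)).re|
      ≤ 8 * exp 1 := by
    rw [← Complex.sub_re]
    exact (Complex.abs_re_le_norm _).trans (norm_sum_primesLE_cpow_neg_sub_primeZeta_le hX hs)
  have heuler := abs_log_norm_riemannZeta_sub_re_primeZeta_le (s := s + δ) (by simp [hs, hδ])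
  have hzeta := hC (s + δ)
    (Complex.mem_reProdIm.mpr ⟨⟨by simp [hs, hδ.le], by simp [hs]; linarith⟩,
      by simpa [s] using abs_le.mp ht⟩)
    (fun h => hz0 (by rw [h, sub_self]))
  have hmax : |log ‖s + δ - 1‖ - log (max δ |t|)| ≤ log 2 := by
    simpa [hz, abs_of_pos hδ] using abs_log_norm_sub_log_max_le hz0
  rw [hsum]
  rw [abs_le] at *
  constructor <;> linarith

/-- For `θ ∈ (0,1]`, `f_θ(p) := 1 + cos(θ log p)` and `β := min{1/θ, log X}`:
`Σ_{p ≤ X} f_θ(p)/p = log(β·log X) + O(1)` with an absolute implied constant. -/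
theorem stmt_10 :
    ∃ K : ℝ, 0 < K ∧ ∀ θ : ℝ, 0 < θ → θ ≤ 1 → ∀ X : ℕ, 3 ≤ X →
      |∑ p ∈ (Finset.range (X + 1)).filter Nat.Prime,
          (1 + Real.cos (θ * Real.log p)) / (p : ℝ) -
        Real.log (min (1 / θ) (Real.log X) * Real.log X)| ≤ K := by
  obtain ⟨C, hC⟩ := exists_abs_sum_primesLE_cos_div_add_log_max_le
  have hC0 : 0 ≤ C := (abs_nonneg _).trans (hC 0 (by simp) 3 le_rfl)
  refine ⟨2 * C + 1, by linarith, fun θ hθ hθ1 X hX => ?_⟩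
  have hlogX : 0 < log X := by linarith [one_le_log_natCast hX]
  have hmin : min (1 / θ) (log X) = (max (log X)⁻¹ θ)⁻¹ := by
    rw [one_div]
    rcases le_total θ (log X)⁻¹ with h | h
    · rw [max_eq_left h, inv_inv, min_eq_right ((le_inv_comm₀ hθ hlogX).mp h)]
    · rw [max_eq_right h, min_eq_left ((inv_le_comm₀ (by positivity) hθ).mp h)]
  have hlog : log (min (1 / θ) (log X) * log X) = log (log X) - log (max (log X)⁻¹ θ) := by
    rw [hmin, log_mul (by positivity) hlogX.ne', log_inv]; ring
  have hrecip := hC 0 (by simp) X hX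
  have hcos := hC θ (by rwa [abs_of_pos hθ]) X hX
  simp only [zero_mul, cos_zero, abs_zero, max_eq_left (inv_pos.mpr hlogX).le, log_inv] at hrecip
  rw [abs_of_pos hθ] at hcos
  rw [hlog, ← Nat.primesLE_eq_filter_range]
  simp only [add_div, sum_add_distrib]
  rw [abs_le] at *
  constructor <;> linarith
end

section
/- For every positive integer n, c₁·(1/d(n))·∫_0^1 |d(n,θ)|² dθ ≤ Δ(n) ≤ c₂·∫_0^1 |d(n,θ)| dθ for absolute constants c₂ > c₁ > 0, where Δ(n) := max_{u ∈ ℝ} #{d | n : e^u < d ≤ e^{u+1}} is Hooley's Delta function and d(n,θ) := Σ_{d|n} d^{iθ}. -/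
open scoped Classical

/-- Hooley's Delta function `Δ(n) = max_{u ∈ ℝ} #{d ∣ n : e^u < d ≤ e^{u+1}}`. -/
noncomputable def hooleyDelta (n : ℕ) : ℝ :=
  ⨆ u : ℝ, (((n.divisors).filter
    (fun d => Real.exp u < (d : ℝ) ∧ (d : ℝ) ≤ Real.exp (u + 1))).card : ℝ)

/- ### Auxiliary kernel integrals -/

lemma fejer_eval (b x : ℝ) (hb : 0 < b) (hx : x ≠ 0) :
    ∫ θ in (0:ℝ)..b, (1 - θ/b) * Real.cos (θ*x)
      = (1 - Real.cos (b*x))/(b*x^2) := by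
  have hcont : Continuous fun θ : ℝ => (1 - θ/b) * Real.cos (θ*x) := by fun_prop
  have key : ∀ θ ∈ Set.uIcc (0:ℝ) b,
      HasDerivAt (fun θ => (1-θ/b)*(Real.sin (θ*x)/x) - Real.cos (θ*x)/(b*x^2))
        ((1 - θ/b) * Real.cos (θ*x)) θ := by
    intro θ _
    have h1 : HasDerivAt (fun θ : ℝ => θ*x) x θ := by
      simpa using (hasDerivAt_id θ).mul_const x
    have g1 : HasDerivAt (fun θ : ℝ => 1 - θ/b) (-(1/b)) θ := by
      simpa using ((hasDerivAt_id θ).div_const b).const_sub 1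
    have g2 : HasDerivAt (fun θ : ℝ => Real.sin (θ*x)/x) (Real.cos (θ*x) * x / x) θ :=
      (h1.sin).div_const x
    have g4 : HasDerivAt (fun θ : ℝ => Real.cos (θ*x)/(b*x^2))
        ((-Real.sin (θ*x) * x)/(b*x^2)) θ :=
      ((Real.hasDerivAt_cos (θ*x)).comp θ h1).div_const _
    have g5 := (g1.mul g2).sub g4
    refine g5.congr_deriv ?_
    have hb' : b ≠ 0 := ne_of_gt hb
    field_simp
    ring
  rw [intervalIntegral.integral_eq_sub_of_hasDerivAt key (hcont.intervalIntegrable _ _)]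
  have hb' : b ≠ 0 := ne_of_gt hb
  field_simp
  simp only [Real.sin_zero, Real.cos_zero, mul_zero]
  ring

lemma fejer_zero (b : ℝ) : ∫ θ in (0:ℝ)..b, (1 - θ/b) * Real.cos (θ*0) = b/2 := by
  simp only [mul_zero, Real.cos_zero, mul_one]
  have h1 : IntervalIntegrable (fun θ : ℝ => θ/b) MeasureTheory.volume 0 b :=
    (by fun_prop : Continuous fun θ : ℝ => θ/b).intervalIntegrable _ _
  rw [intervalIntegral.integral_sub (intervalIntegrable_const) h1]
  rw [intervalIntegral.integral_div, integral_id]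
  simp
  rcases eq_or_ne b 0 with h|h
  · simp [h]
  · field_simp; ring

noncomputable def Gk (x : ℝ) : ℝ := ∫ θ in (0:ℝ)..2, (1 - θ/2) * Real.cos (θ*x)

lemma Gk_le_two (x : ℝ) : Gk x ≤ 2 := by
  have h : ∀ θ ∈ Set.Icc (0:ℝ) 2, (1 - θ/2) * Real.cos (θ*x) ≤ 1 := by
    intro θ hθ
    have h1 : |(1 - θ/2) * Real.cos (θ*x)| ≤ 1 := by
      rw [abs_mul]
      have : |1 - θ/2| ≤ 1 := by rw [abs_le]; constructor <;> [linarith [hθ.2]; linarith [hθ.1]]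
      exact mul_le_one₀ this (abs_nonneg _) (Real.abs_cos_le_one _)
    linarith [abs_le.1 h1]
  have := intervalIntegral.integral_mono_on (by norm_num : (0:ℝ) ≤ 2)
    ((by fun_prop : Continuous fun θ : ℝ => (1 - θ/2) * Real.cos (θ*x)).intervalIntegrable _ _)
    (intervalIntegrable_const : IntervalIntegrable (fun _ => (1:ℝ)) MeasureTheory.volume 0 2) h
  rw [Gk]
  have h2 : ∫ _ in (0:ℝ)..2, (1:ℝ) = 2 := by simp
  calc (∫ θ in (0:ℝ)..2, (1 - θ/2) * Real.cos (θ*x)) ≤ ∫ _ in (0:ℝ)..2, (1:ℝ) := this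
    _ = 2 := h2

lemma Gk_le_inv_sq (x : ℝ) (hx : x ≠ 0) : Gk x ≤ 1/x^2 := by
  rw [Gk, fejer_eval 2 x (by norm_num) hx]
  have h1 : -1 ≤ Real.cos (2*x) := Real.neg_one_le_cos _
  have hx2 : 0 < x^2 := by positivity
  rw [div_le_div_iff₀ (by positivity) hx2]
  nlinarith

noncomputable def Kk (x : ℝ) : ℝ := 2 * ∫ θ in (0:ℝ)..1, (1 - θ) * Real.cos (θ*x)

lemma Kk_eval (x : ℝ) (hx : x ≠ 0) : Kk x = 2 * (1 - Real.cos x) / x^2 := by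
  have := fejer_eval 1 x (by norm_num) hx
  simp only [div_one] at this
  rw [Kk, this]
  simp
  ring

lemma Kk_zero : Kk 0 = 1 := by
  have h := fejer_zero 1
  simp only [div_one] at h
  rw [Kk, h]
  norm_num

lemma Kk_nonneg (x : ℝ) : 0 ≤ Kk x := by
  rcases eq_or_ne x 0 with h|h
  · rw [h, Kk_zero]; norm_num
  · rw [Kk_eval x h]
    have h1 := Real.cos_le_one x
    apply div_nonneg (by linarith) (by positivity)

lemma Kk_ge (x : ℝ) (hx : |x| ≤ 1/2) : 9/10 ≤ Kk x := by
  rcases eq_or_ne x 0 with h|h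
  · rw [h, Kk_zero]; norm_num
  · rw [Kk_eval x h]
    have hssq : Real.sin (x/2)^2 = 1/2 - Real.cos x / 2 := by
      have := Real.sin_sq_eq_half_sub (x/2)
      rwa [show 2*(x/2) = x by ring] at this
    have h1 : 1 - Real.cos x = 2 * Real.sin (x/2)^2 := by linarith
    have hax : 0 < |x| := abs_pos.2 h
    have hsin : |x|/2 - (|x|/2)^3/4 < Real.sin (|x|/2) :=
      by have := Real.sin_gt_sub_cube (x := |x|/2) (by positivity)
         have h3 : 0 < (|x|/2)^3 := by positivity
         linarith
    have hsq : Real.sin (x/2)^2 = Real.sin (|x|/2)^2 := by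
      rcases abs_cases x with ⟨h1,_⟩|⟨h1,_⟩
      · rw [h1]
      · rw [h1]; rw [show -x/2 = -(x/2) by ring, Real.sin_neg]; ring
    have ht : |x|/2 ≤ 1/4 := by linarith
    have ht0 : 0 < |x|/2 := by positivity
    have htt : (|x|/2)*(|x|/2) ≤ 1/16 := by nlinarith
    have hs63 : (|x|/2)*(63/64) ≤ Real.sin (|x|/2) := by
      nlinarith [mul_le_mul_of_nonneg_left htt ht0.le]
    have hsinpos : 0 < Real.sin (|x|/2) := by nlinarith
    have hx2 : 0 < x^2 := by positivity
    have habs2 : |x|^2 = x^2 := sq_abs x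
    rw [le_div_iff₀ hx2, h1, hsq]
    nlinarith [mul_le_mul hs63 hs63 (by positivity) hsinpos.le]

/- ### The character sum in real terms -/

lemma cpow_eq (d : ℕ) (hd : d ≠ 0) (θ : ℝ) :
    (d:ℂ) ^ (Complex.I * (θ:ℂ)) = Complex.exp (((θ * Real.log d : ℝ) : ℂ) * Complex.I) := by
  have hd0 : (d:ℂ) ≠ 0 := Nat.cast_ne_zero.2 hd
  rw [Complex.cpow_def_of_ne_zero hd0]
  congr 1
  have : Complex.log (d:ℂ) = ((Real.log d : ℝ) : ℂ) := by
    rw [show ((d:ℕ):ℂ) = (((d:ℝ)):ℂ) by push_cast; ring]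
    exact (Complex.ofReal_log (by positivity)).symm
  rw [this]
  push_cast
  ring

lemma sum_cpow_eq (n : ℕ) (θ : ℝ) :
    ∑ d ∈ n.divisors, (d:ℂ) ^ (Complex.I * (θ:ℂ))
      = ∑ d ∈ n.divisors, Complex.exp (((θ * Real.log d : ℝ) : ℂ) * Complex.I) :=
  Finset.sum_congr rfl fun d hd => cpow_eq d (Nat.pos_of_mem_divisors hd).ne' θ

noncomputable def Sr (n : ℕ) (θ : ℝ) : ℝ := ∑ d ∈ n.divisors, Real.cos (θ * Real.log d)
noncomputable def Tr (n : ℕ) (θ : ℝ) : ℝ := ∑ d ∈ n.divisors, Real.sin (θ * Real.log d)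

lemma re_sum_exp (n : ℕ) (θ : ℝ) :
    (∑ d ∈ n.divisors, Complex.exp (((θ * Real.log d : ℝ) : ℂ) * Complex.I)).re = Sr n θ := by
  rw [Complex.re_sum, Sr]
  exact Finset.sum_congr rfl fun d _ => Complex.exp_ofReal_mul_I_re _

lemma im_sum_exp (n : ℕ) (θ : ℝ) :
    (∑ d ∈ n.divisors, Complex.exp (((θ * Real.log d : ℝ) : ℂ) * Complex.I)).im = Tr n θ := by
  rw [Complex.im_sum, Tr]
  exact Finset.sum_congr rfl fun d _ => Complex.exp_ofReal_mul_I_im _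

lemma abs_sum_sq (n : ℕ) (θ : ℝ) :
    ‖∑ d ∈ n.divisors, (d:ℂ) ^ (Complex.I * (θ:ℂ))‖ ^ 2
      = Sr n θ ^ 2 + Tr n θ ^ 2 := by
  rw [sum_cpow_eq, Complex.sq_norm, Complex.normSq_apply, re_sum_exp, im_sum_exp]
  ring

lemma sq_expand (n : ℕ) (θ : ℝ) :
    Sr n θ ^ 2 + Tr n θ ^ 2
      = ∑ d ∈ n.divisors, ∑ e ∈ n.divisors, Real.cos (θ * (Real.log d - Real.log e)) := by
  rw [Sr, Tr, sq, sq, Finset.sum_mul_sum, Finset.sum_mul_sum, ← Finset.sum_add_distrib]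
  refine Finset.sum_congr rfl fun d _ => ?_
  rw [← Finset.sum_add_distrib]
  refine Finset.sum_congr rfl fun e _ => ?_
  rw [show θ * (Real.log d - Real.log e) = θ * Real.log d - θ * Real.log e by ring,
    Real.cos_sub]

noncomputable def Scr (n : ℕ) (c θ : ℝ) : ℝ :=
  ∑ d ∈ n.divisors, Real.cos (θ * (Real.log d - c))

lemma Scr_le_abs (n : ℕ) (c θ : ℝ) :
    Scr n c θ ≤ ‖∑ d ∈ n.divisors, (d:ℂ) ^ (Complex.I * (θ:ℂ))‖ := by
  set A := ‖∑ d ∈ n.divisors, (d:ℂ) ^ (Complex.I * (θ:ℂ))‖ with hA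
  have hA0 : 0 ≤ A := norm_nonneg _
  have hexp : Scr n c θ = Sr n θ * Real.cos (θ*c) + Tr n θ * Real.sin (θ*c) := by
    rw [Scr, Sr, Tr, Finset.sum_mul, Finset.sum_mul, ← Finset.sum_add_distrib]
    refine Finset.sum_congr rfl fun d _ => ?_
    rw [show θ * (Real.log d - c) = θ * Real.log d - θ * c by ring, Real.cos_sub]
  have hsq : Scr n c θ ^ 2 ≤ A ^ 2 := by
    rw [hA, abs_sum_sq, hexp]
    nlinarith [sq_nonneg (Sr n θ * Real.sin (θ*c) - Tr n θ * Real.cos (θ*c)),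
      Real.sin_sq_add_cos_sq (θ*c)]
  nlinarith

lemma cont_sum (n : ℕ) :
    Continuous fun θ : ℝ => ∑ d ∈ n.divisors, (d:ℂ) ^ (Complex.I * (θ:ℂ)) := by
  have : (fun θ : ℝ => ∑ d ∈ n.divisors, (d:ℂ) ^ (Complex.I * (θ:ℂ)))
      = fun θ : ℝ => ∑ d ∈ n.divisors, Complex.exp (((θ * Real.log d : ℝ) : ℂ) * Complex.I) := by
    funext θ; exact sum_cpow_eq n θ
  rw [this]
  refine continuous_finset_sum _ fun d _ => ?_
  fun_prop

lemma cont_abs_sum (n : ℕ) :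
    Continuous fun θ : ℝ => ‖∑ d ∈ n.divisors, (d:ℂ) ^ (Complex.I * (θ:ℂ))‖ :=
  continuous_norm.comp (cont_sum n)

/- ### The Delta function -/

noncomputable def delta' (n : ℕ) : ℝ :=
  ⨆ u : ℝ, ((n.divisors.filter
    (fun d : ℕ => Real.exp u < (d:ℝ) ∧ (d:ℝ) ≤ Real.exp (u+1))).card : ℝ)

lemma hooleyDelta_eq (n : ℕ) : hooleyDelta n = delta' n := by
  unfold hooleyDelta delta'
  congr 1
  funext u
  congr 1
  have himg : (do let a ← n.divisors; pure ((a:ℝ)) : Finset ℝ)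
      = n.divisors.image (fun a : ℕ => (a:ℝ)) := by
    simp [Finset.image]
  rw [himg, Finset.filter_image,
    Finset.card_image_of_injective _ Nat.cast_injective]

lemma cnt_bdd (n : ℕ) : BddAbove (Set.range fun u : ℝ =>
    ((n.divisors.filter
      (fun d : ℕ => Real.exp u < (d:ℝ) ∧ (d:ℝ) ≤ Real.exp (u+1))).card : ℝ)) := by
  refine ⟨(n.divisors.card : ℝ), ?_⟩
  rintro x ⟨u, rfl⟩
  exact Nat.cast_le.2 (Finset.card_filter_le _ _)

lemma delta_ge (n : ℕ) (u : ℝ) :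
    ((n.divisors.filter
      (fun d : ℕ => Real.exp u < (d:ℝ) ∧ (d:ℝ) ≤ Real.exp (u+1))).card : ℝ)
      ≤ delta' n :=
  le_ciSup (cnt_bdd n) u

lemma delta'_le (n : ℕ) {B : ℝ} (h : ∀ u : ℝ, ((n.divisors.filter
      (fun d : ℕ => Real.exp u < (d:ℝ) ∧ (d:ℝ) ≤ Real.exp (u+1))).card : ℝ) ≤ B) :
    delta' n ≤ B :=
  ciSup_le h

lemma delta'_nonneg (n : ℕ) : 0 ≤ delta' n :=
  le_trans (by positivity) (delta_ge n 0)

lemma count_le (n : ℕ) (a : ℝ) :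
    ((n.divisors.filter
      (fun d : ℕ => a < Real.log d ∧ Real.log d ≤ a + 1)).card : ℝ) ≤ delta' n := by
  refine le_trans ?_ (delta_ge n a)
  have : n.divisors.filter (fun d : ℕ => a < Real.log d ∧ Real.log d ≤ a + 1)
      = n.divisors.filter (fun d : ℕ => Real.exp a < (d:ℝ) ∧ (d:ℝ) ≤ Real.exp (a+1)) := by
    refine Finset.filter_congr fun d hd => ?_
    have hd0 : 0 < (d:ℝ) := by exact_mod_cast Nat.pos_of_mem_divisors hd
    rw [Real.lt_log_iff_exp_lt hd0, Real.log_le_iff_le_exp hd0]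
  rw [this]

lemma count3_le (n : ℕ) (c : ℝ) (k : ℕ) :
    ((n.divisors.filter
      (fun e : ℕ => (k:ℝ) ≤ |c - Real.log e| ∧ |c - Real.log e| < (k:ℝ) + 1)).card : ℝ)
      ≤ 3 * delta' n := by
  set D := n.divisors with hD
  have hsub : D.filter (fun e : ℕ => (k:ℝ) ≤ |c - Real.log e| ∧ |c - Real.log e| < (k:ℝ) + 1)
      ⊆ (D.filter (fun e : ℕ => c + k - 1 < Real.log e ∧ Real.log e ≤ (c + k - 1) + 1))
        ∪ ((D.filter (fun e : ℕ => c + k < Real.log e ∧ Real.log e ≤ (c + k) + 1))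
        ∪ (D.filter (fun e : ℕ => c - k - 1 < Real.log e ∧ Real.log e ≤ (c - k - 1) + 1))) := by
    intro e he
    rw [Finset.mem_filter] at he
    obtain ⟨heD, h1, h2⟩ := he
    rcases abs_cases (c - Real.log e) with ⟨habs, hsign⟩|⟨habs, hsign⟩
    · refine Finset.mem_union_right _ (Finset.mem_union_right _
        (Finset.mem_filter.2 ⟨heD, ?_, ?_⟩))
      · rw [habs] at h2; linarith
      · rw [habs] at h1; linarith
    · rw [habs] at h1 h2
      rcases le_or_gt (Real.log e) (c + k) with h3|h3
      · exact Finset.mem_union_left _ (Finset.mem_filter.2 ⟨heD, by linarith, by linarith⟩)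
      · exact Finset.mem_union_right _ (Finset.mem_union_left _
          (Finset.mem_filter.2 ⟨heD, h3, by linarith⟩))
  have hcard := Finset.card_le_card hsub
  have h2 := Finset.card_union_le
    (D.filter (fun e : ℕ => c + k - 1 < Real.log e ∧ Real.log e ≤ (c + k - 1) + 1))
    ((D.filter (fun e : ℕ => c + k < Real.log e ∧ Real.log e ≤ (c + k) + 1))
      ∪ (D.filter (fun e : ℕ => c - k - 1 < Real.log e ∧ Real.log e ≤ (c - k - 1) + 1)))
  have h1 := Finset.card_union_le
    (D.filter (fun e : ℕ => c + k < Real.log e ∧ Real.log e ≤ (c + k) + 1))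
    (D.filter (fun e : ℕ => c - k - 1 < Real.log e ∧ Real.log e ≤ (c - k - 1) + 1))
  have c1 := count_le n (c + k - 1)
  have c2 := count_le n (c + k)
  have c3 := count_le n (c - k - 1)
  rw [← hD] at c1 c2 c3
  have : ((D.filter (fun e : ℕ => (k:ℝ) ≤ |c - Real.log e| ∧ |c - Real.log e| < (k:ℝ) + 1)).card : ℝ)
      ≤ ((D.filter (fun e : ℕ => c + k - 1 < Real.log e ∧ Real.log e ≤ (c + k - 1) + 1)).card : ℝ)
        + ((D.filter (fun e : ℕ => c + k < Real.log e ∧ Real.log e ≤ (c + k) + 1)).card : ℝ)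
        + ((D.filter (fun e : ℕ => c - k - 1 < Real.log e ∧ Real.log e ≤ (c - k - 1) + 1)).card : ℝ) := by
    have := le_trans hcard (le_trans h2 (Nat.add_le_add_left h1 _))
    exact_mod_cast le_trans (Nat.cast_le.2 this) (by push_cast; linarith)
  linarith

/- ### The series `2 + ∑ 1/k²` -/

noncomputable def bseq (k : ℕ) : ℝ := if k = 0 then 2 else 1/(k:ℝ)^2

lemma bseq_nonneg (k : ℕ) : 0 ≤ bseq k := by
  unfold bseq; split <;> positivity

lemma bseq_key (m : ℕ) : ∑ k ∈ Finset.range (m + 1), bseq k ≤ 4 - 1/(max m 1 : ℕ) := by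
  induction m with
  | zero => simp [bseq]; norm_num
  | succ j ihj =>
    rw [Finset.sum_range_succ]
    have hb : bseq (j+1) = 1/((j:ℝ)+1)^2 := by
      unfold bseq; simp
    rcases Nat.eq_zero_or_pos j with hj|hj
    · subst hj
      simp [bseq, Finset.sum_range_succ] at *
      norm_num
    · have hmax : (max j 1 : ℕ) = j := by omega
      have hmax2 : (max (j+1) 1 : ℕ) = j + 1 := by omega
      rw [hmax] at ihj
      rw [hmax2, hb]
      have hj0 : (0:ℝ) < j := by exact_mod_cast hj
      have : 1/((j:ℝ)+1)^2 ≤ 1/(j:ℝ) - 1/((j:ℝ)+1) := by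
        rw [div_sub_div _ _ (ne_of_gt hj0) (by positivity)]
        rw [div_le_div_iff₀ (by positivity) (by positivity)]
        nlinarith
      push_cast
      linarith

lemma bseq_sum_le (M : ℕ) : ∑ k ∈ Finset.range M, bseq k ≤ 4 := by
  rcases Nat.eq_zero_or_pos M with h|h
  · simp [h]
  obtain ⟨m, rfl⟩ : ∃ m, M = m + 1 := ⟨M - 1, by omega⟩
  refine le_trans (bseq_key m) ?_
  have : (0:ℝ) < (max m 1 : ℕ) := by
    have : 1 ≤ max m 1 := le_max_right _ _
    exact_mod_cast Nat.lt_of_lt_of_le Nat.zero_lt_one this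
  have h2 : 0 ≤ 1/((max m 1 : ℕ):ℝ) := by positivity
  linarith

/- ### The key combinatorial bound -/

lemma log_div_bound {n e : ℕ} (hn : 1 ≤ n) (he : e ∈ n.divisors) (c : ℝ)
    (hc0 : 0 ≤ c) (hcn : c ≤ Real.log n) : |c - Real.log e| < n := by
  have he1 : 1 ≤ e := Nat.pos_of_mem_divisors he
  have hen : e ≤ n := Nat.le_of_dvd (by omega) (Nat.dvd_of_mem_divisors he)
  have hle0 : 0 ≤ Real.log e := Real.log_natCast_nonneg e
  have hlen : Real.log e ≤ Real.log n := by
    apply Real.log_le_log (by exact_mod_cast he1) (by exact_mod_cast hen)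
  have hlogn : Real.log n < n := by
    have h1 := Real.log_le_sub_one_of_pos (show (0:ℝ) < n by exact_mod_cast hn)
    linarith
  rw [abs_sub_lt_iff]
  constructor <;> linarith

lemma per_d (n : ℕ) (hn : 1 ≤ n) (d : ℕ) (hd : d ∈ n.divisors) :
    ∑ e ∈ n.divisors, Gk (Real.log d - Real.log e) ≤ 12 * delta' n := by
  set c := Real.log d with hc
  set D := n.divisors with hD
  have hc0 : 0 ≤ c := Real.log_natCast_nonneg d
  have hcn : c ≤ Real.log n := by
    apply Real.log_le_log
    · exact_mod_cast Nat.pos_of_mem_divisors hd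
    · exact_mod_cast Nat.le_of_dvd (by omega) (Nat.dvd_of_mem_divisors hd)
  have hmap : ∀ e ∈ D, (⌊|c - Real.log e|⌋).toNat ∈ Finset.range n := by
    intro e he
    rw [Finset.mem_range]
    have hlt := log_div_bound hn he c hc0 hcn
    have h1 : ⌊|c - Real.log e|⌋ < (n:ℤ) := Int.floor_lt.2 (by exact_mod_cast hlt)
    omega
  rw [← Finset.sum_fiberwise_of_maps_to hmap (fun e => Gk (c - Real.log e))]
  have step : ∀ k ∈ Finset.range n,
      ∑ e ∈ D.filter (fun e : ℕ => (⌊|c - Real.log e|⌋).toNat = k), Gk (c - Real.log e)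
        ≤ (3 * delta' n) * bseq k := by
    intro k _
    have hfib : ∀ e ∈ D.filter (fun e : ℕ => (⌊|c - Real.log e|⌋).toNat = k),
        (k:ℝ) ≤ |c - Real.log e| ∧ |c - Real.log e| < (k:ℝ) + 1 := by
      intro e he
      rw [Finset.mem_filter] at he
      have h0 : (0:ℤ) ≤ ⌊|c - Real.log e|⌋ := Int.floor_nonneg.2 (abs_nonneg _)
      have hk : ⌊|c - Real.log e|⌋ = (k:ℤ) := by omega
      constructor
      · calc ((k:ℝ)) = ((k:ℤ):ℝ) := by push_cast; ring
          _ ≤ _ := by rw [← hk]; exact Int.floor_le _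
      · have := Int.lt_floor_add_one (|c - Real.log e|)
        rw [hk] at this
        push_cast at this ⊢
        linarith
    have hterm : ∀ e ∈ D.filter (fun e : ℕ => (⌊|c - Real.log e|⌋).toNat = k),
        Gk (c - Real.log e) ≤ bseq k := by
      intro e he
      obtain ⟨h1, h2⟩ := hfib e he
      rcases Nat.eq_zero_or_pos k with hk0|hk0
      · subst hk0; unfold bseq; simpa using Gk_le_two _
      · have hk1 : (1:ℝ) ≤ (k:ℝ) := by exact_mod_cast hk0
        have hx0 : c - Real.log e ≠ 0 := by
          intro h; rw [h] at h1; simp at h1; linarith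
        refine le_trans (Gk_le_inv_sq _ hx0) ?_
        unfold bseq
        rw [if_neg (by omega)]
        have hsq : (k:ℝ)^2 ≤ (c - Real.log e)^2 := by
          rw [← sq_abs (c - Real.log e)]
          nlinarith
        apply div_le_div_of_nonneg_left (by norm_num) (by positivity) hsq
    refine le_trans (Finset.sum_le_sum hterm) ?_
    rw [Finset.sum_const, nsmul_eq_mul]
    have hcard : ((D.filter (fun e : ℕ => (⌊|c - Real.log e|⌋).toNat = k)).card : ℝ)
        ≤ 3 * delta' n := by
      refine le_trans ?_ (count3_le n c k)
      have hsub : D.filter (fun e : ℕ => (⌊|c - Real.log e|⌋).toNat = k)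
          ⊆ D.filter (fun e : ℕ => (k:ℝ) ≤ |c - Real.log e| ∧ |c - Real.log e| < (k:ℝ) + 1) := by
        intro e he
        rw [Finset.mem_filter]
        exact ⟨(Finset.mem_filter.1 he).1, hfib e he⟩
      exact Nat.cast_le.2 (Finset.card_le_card hsub)
    exact mul_le_mul_of_nonneg_right hcard (bseq_nonneg k)
  refine le_trans (Finset.sum_le_sum step) ?_
  rw [← Finset.mul_sum]
  have h4 := bseq_sum_le n
  have hΔ := delta'_nonneg n
  nlinarith

/- ### Main estimates -/

lemma cont_g (n : ℕ) : Continuous fun θ : ℝ =>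
    ∑ d ∈ n.divisors, ∑ e ∈ n.divisors, Real.cos (θ * (Real.log d - Real.log e)) := by
  refine continuous_finset_sum _ fun d _ => continuous_finset_sum _ fun e _ => ?_
  fun_prop

lemma g_nonneg (n : ℕ) (θ : ℝ) :
    0 ≤ ∑ d ∈ n.divisors, ∑ e ∈ n.divisors, Real.cos (θ * (Real.log d - Real.log e)) := by
  rw [← sq_expand, ← abs_sum_sq]; positivity

set_option maxHeartbeats 1000000 in
lemma lower_main (n : ℕ) (hn : 1 ≤ n) :
    (∫ θ in (0:ℝ)..1, ‖∑ d ∈ n.divisors, (d:ℂ) ^ (Complex.I * (θ:ℂ))‖ ^ 2)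
      ≤ 24 * n.divisors.card * delta' n := by
  set g : ℝ → ℝ := fun θ =>
    ∑ d ∈ n.divisors, ∑ e ∈ n.divisors, Real.cos (θ * (Real.log d - Real.log e)) with hg
  have hfun : (fun θ : ℝ => ‖∑ d ∈ n.divisors, (d:ℂ) ^ (Complex.I * (θ:ℂ))‖ ^ 2)
      = g := by
    funext θ; rw [abs_sum_sq, sq_expand]
  rw [hfun]
  have hgc : Continuous g := cont_g n
  have hg0 : ∀ θ, 0 ≤ g θ := g_nonneg n
  have hint1 : IntervalIntegrable g MeasureTheory.volume 0 1 := hgc.intervalIntegrable _ _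
  have hgc2 : Continuous fun θ : ℝ => 2*(1-θ/2) * g θ := by fun_prop
  have step1 : (∫ θ in (0:ℝ)..1, g θ) ≤ ∫ θ in (0:ℝ)..1, 2*(1-θ/2) * g θ := by
    refine intervalIntegral.integral_mono_on (by norm_num) hint1
      (hgc2.intervalIntegrable _ _) fun θ hθ => ?_
    obtain ⟨h0, h1⟩ := hθ
    nlinarith [hg0 θ]
  have step2 : (∫ θ in (0:ℝ)..1, 2*(1-θ/2) * g θ) ≤ ∫ θ in (0:ℝ)..2, 2*(1-θ/2) * g θ := by
    rw [← intervalIntegral.integral_add_adjacent_intervals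
      (hgc2.intervalIntegrable (a := (0:ℝ)) (b := 1)) (hgc2.intervalIntegrable (a := (1:ℝ)) (b := 2))]
    have : 0 ≤ ∫ θ in (1:ℝ)..2, 2*(1-θ/2) * g θ := by
      refine intervalIntegral.integral_nonneg (by norm_num) fun θ hθ => ?_
      obtain ⟨h1, h2⟩ := hθ
      have := hg0 θ
      nlinarith
    linarith
  have step3 : (∫ θ in (0:ℝ)..2, 2*(1-θ/2) * g θ)
      = 2 * ∑ d ∈ n.divisors, ∑ e ∈ n.divisors, Gk (Real.log d - Real.log e) := by
    have hrw : (fun θ : ℝ => 2*(1-θ/2) * g θ)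
        = fun θ : ℝ => ∑ d ∈ n.divisors, ∑ e ∈ n.divisors,
            2*((1 - θ/2) * Real.cos (θ*(Real.log d - Real.log e))) := by
      funext θ
      rw [hg, Finset.mul_sum]
      refine Finset.sum_congr rfl fun d _ => ?_
      rw [Finset.mul_sum]
      refine Finset.sum_congr rfl fun e _ => ?_
      ring
    rw [hrw]
    rw [intervalIntegral.integral_finset_sum]
    · rw [Finset.mul_sum]
      refine Finset.sum_congr rfl fun d _ => ?_
      rw [intervalIntegral.integral_finset_sum]
      · rw [Finset.mul_sum]
        refine Finset.sum_congr rfl fun e _ => ?_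
        rw [Gk, ← intervalIntegral.integral_const_mul]
      · intro e _
        exact (by fun_prop : Continuous fun θ : ℝ =>
          2*((1 - θ/2) * Real.cos (θ*(Real.log d - Real.log e)))).intervalIntegrable _ _
    · intro d _
      refine (Continuous.intervalIntegrable ?_ _ _)
      refine continuous_finset_sum _ fun e _ => ?_
      fun_prop
  have step4 : ∑ d ∈ n.divisors, ∑ e ∈ n.divisors, Gk (Real.log d - Real.log e)
      ≤ 12 * n.divisors.card * delta' n := by
    calc _ ≤ ∑ d ∈ n.divisors, 12 * delta' n :=
          Finset.sum_le_sum fun d hd => per_d n hn d hd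
      _ = 12 * n.divisors.card * delta' n := by
          rw [Finset.sum_const, nsmul_eq_mul]; ring
  calc (∫ θ in (0:ℝ)..1, g θ) ≤ ∫ θ in (0:ℝ)..2, 2*(1-θ/2) * g θ := le_trans step1 step2
    _ = 2 * ∑ d ∈ n.divisors, ∑ e ∈ n.divisors, Gk (Real.log d - Real.log e) := step3
    _ ≤ 2 * (12 * n.divisors.card * delta' n) := by linarith [step4]
    _ = 24 * n.divisors.card * delta' n := by ring

set_option maxHeartbeats 1000000 in
lemma upper_main (n : ℕ) (u : ℝ) :
    ((n.divisors.filter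
      (fun d : ℕ => Real.exp u < (d:ℝ) ∧ (d:ℝ) ≤ Real.exp (u+1))).card : ℝ)
      ≤ (20/9) * ∫ θ in (0:ℝ)..1,
          ‖∑ d ∈ n.divisors, (d:ℂ) ^ (Complex.I * (θ:ℂ))‖ := by
  set c := u + 1/2 with hc
  set F := n.divisors.filter
      (fun d : ℕ => Real.exp u < (d:ℝ) ∧ (d:ℝ) ≤ Real.exp (u+1)) with hF
  have hK : ∀ d ∈ F, (9:ℝ)/10 ≤ Kk (Real.log d - c) := by
    intro d hd
    rw [hF, Finset.mem_filter] at hd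
    obtain ⟨hdD, h1, h2⟩ := hd
    have hd0 : 0 < (d:ℝ) := by exact_mod_cast Nat.pos_of_mem_divisors hdD
    have hl1 : u < Real.log d := (Real.lt_log_iff_exp_lt hd0).2 h1
    have hl2 : Real.log d ≤ u + 1 := (Real.log_le_iff_le_exp hd0).2 h2
    refine Kk_ge _ ?_
    rw [abs_le]
    constructor <;> (rw [hc]; linarith)
  have h1 : (9:ℝ)/10 * F.card ≤ ∑ d ∈ F, Kk (Real.log d - c) := by
    calc (9:ℝ)/10 * F.card = ∑ _d ∈ F, (9:ℝ)/10 := by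
          rw [Finset.sum_const, nsmul_eq_mul]; ring
      _ ≤ _ := Finset.sum_le_sum hK
  have h2 : ∑ d ∈ F, Kk (Real.log d - c) ≤ ∑ d ∈ n.divisors, Kk (Real.log d - c) :=
    Finset.sum_le_sum_of_subset_of_nonneg (Finset.filter_subset _ _)
      (fun d _ _ => Kk_nonneg _)
  have h3 : ∑ d ∈ n.divisors, Kk (Real.log d - c)
      = 2 * ∫ θ in (0:ℝ)..1, (1-θ) * Scr n c θ := by
    have hrw : (fun θ : ℝ => (1-θ) * Scr n c θ)
        = fun θ : ℝ => ∑ d ∈ n.divisors, (1-θ) * Real.cos (θ*(Real.log d - c)) := by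
      funext θ
      rw [Scr, Finset.mul_sum]
    rw [hrw, intervalIntegral.integral_finset_sum, Finset.mul_sum]
    · exact Finset.sum_congr rfl fun d _ => by rw [Kk]
    · intro d _
      exact (by fun_prop : Continuous fun θ : ℝ =>
        (1-θ) * Real.cos (θ*(Real.log d - c))).intervalIntegrable _ _
  have h4 : (∫ θ in (0:ℝ)..1, (1-θ) * Scr n c θ)
      ≤ ∫ θ in (0:ℝ)..1, ‖∑ d ∈ n.divisors, (d:ℂ) ^ (Complex.I * (θ:ℂ))‖ := by
    refine intervalIntegral.integral_mono_on (by norm_num)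
      ((by
        refine Continuous.mul (by fun_prop) ?_
        refine continuous_finset_sum _ fun d _ => ?_
        fun_prop : Continuous fun θ : ℝ => (1-θ) * Scr n c θ).intervalIntegrable _ _)
      ((cont_abs_sum n).intervalIntegrable _ _) fun θ hθ => ?_
    obtain ⟨h0, hθ1⟩ := hθ
    have hs := Scr_le_abs n c θ
    have hA : 0 ≤ ‖∑ d ∈ n.divisors, (d:ℂ) ^ (Complex.I * (θ:ℂ))‖ :=
      norm_nonneg _
    rcases le_or_gt 0 (Scr n c θ) with hsc|hsc
    · nlinarith
    · nlinarith
  have hF4 := le_trans h1 (le_trans h2 (le_of_eq h3))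
  have hF5 : (9:ℝ)/10 * F.card ≤ 2 * ∫ θ in (0:ℝ)..1,
      ‖∑ d ∈ n.divisors, (d:ℂ) ^ (Complex.I * (θ:ℂ))‖ := by linarith
  linarith

/-- There are absolute constants `c₂ > c₁ > 0` such that for every `n ≥ 1`,
`c₁·(1/d(n))·∫_0^1 |d(n,θ)|² dθ ≤ Δ(n) ≤ c₂·∫_0^1 |d(n,θ)| dθ`, where
`d(n,θ) = Σ_{d|n} d^{iθ}` and `d(n)` is the number of divisors of `n`. -/
theorem stmt_13 :
    ∃ c₁ c₂ : ℝ, 0 < c₁ ∧ c₁ < c₂ ∧ ∀ n : ℕ, 1 ≤ n →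
      c₁ * (1 / (n.divisors.card : ℝ)) *
          ∫ θ in (0 : ℝ)..1,
            ‖∑ d ∈ n.divisors, (d : ℂ) ^ (Complex.I * (θ : ℂ))‖ ^ 2 ≤
        hooleyDelta n ∧
      hooleyDelta n ≤
        c₂ * ∫ θ in (0 : ℝ)..1,
          ‖∑ d ∈ n.divisors, (d : ℂ) ^ (Complex.I * (θ : ℂ))‖ := by
  refine ⟨1/24, 20/9, by norm_num, by norm_num, fun n hn => ?_⟩
  have hcardpos : 0 < (n.divisors.card : ℝ) := by
    have hne : n.divisors.Nonempty := ⟨1, Nat.one_mem_divisors.2 (by omega)⟩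
    exact_mod_cast Finset.card_pos.2 hne
  constructor
  · rw [hooleyDelta_eq]
    have h := lower_main n hn
    have hpos : (0:ℝ) ≤ (1/24) * (1/(n.divisors.card:ℝ)) := by positivity
    calc (1/24) * (1/(n.divisors.card:ℝ)) *
          ∫ θ in (0:ℝ)..1, ‖∑ d ∈ n.divisors, (d:ℂ) ^ (Complex.I * (θ:ℂ))‖ ^ 2
        ≤ (1/24) * (1/(n.divisors.card:ℝ)) * (24 * n.divisors.card * delta' n) :=
          mul_le_mul_of_nonneg_left h hpos
      _ = delta' n := by field_simp
  · rw [hooleyDelta_eq]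
    exact delta'_le n fun u => upper_main n u
end
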